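/- arXiv:2411.01720 — 4 statements merged into one kernel-verified Lean document; each statement's English description precedes it below -/
import Mathlib

section
/- Suppose the n-node graph G contains a clique of size k, and suppose k/T ∈ ℕ. Then for any γ > 0, the game G(k,γ) admits a uniform T-sparse CCE (i.e., a uniform T-sparse 0-CCE) with welfare exactly 1 + γT/k. -/
set_option maxHeartbeats 1600000


/-- A probability distribution on a finite type. -/
def IsDist {I : Type*} [Fintype I] (x : I → ℝ) : Prop :=
  (∀ i, 0 ≤ x i) ∧ ∑ i, x i = 1

/-- `μ` is an `ε`-coarse correlated equilibrium of the game with payoff matrices `R, C`. -/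
def IsCCE {I : Type*} [Fintype I] (R C : Matrix I I ℝ) (μ : I → I → ℝ) (ε : ℝ) : Prop :=
  (∀ a' : I, ∑ a, ∑ b, μ a b * R a b ≥ ∑ a, ∑ b, μ a b * R a' b - ε) ∧
  (∀ b' : I, ∑ a, ∑ b, μ a b * C a b ≥ ∑ a, ∑ b, μ a b * C a b' - ε)

/-- The (utilitarian) social welfare of a correlated distribution `μ`. -/
def sw {I : Type*} [Fintype I] (R C : Matrix I I ℝ) (μ : I → I → ℝ) : ℝ :=
  ∑ a, ∑ b, μ a b * (R a b + C a b)

/-- The adjacency matrix of `G`, with ones on the diagonal: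
`A i j = 1` iff `{i, j}` is an edge or `i = j`. -/
def adjMat (n : ℕ) (G : SimpleGraph (Fin n)) [DecidableRel G.Adj] :
    Matrix (Fin n) (Fin n) ℝ :=
  fun i j => if i = j ∨ G.Adj i j then 1 else 0

/-- The row player's payoff matrix of the game `𝒢(k, γ)`:
`R = ½ [[A + γ Iₙ, −k Iₙ], [k Iₙ, 0ₙ]]`. -/
noncomputable def Rmat (n : ℕ) (G : SimpleGraph (Fin n)) [DecidableRel G.Adj]
    (k : ℕ) (γ : ℝ) : Matrix (Fin n ⊕ Fin n) (Fin n ⊕ Fin n) ℝ :=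
  (1 / 2 : ℝ) • Matrix.fromBlocks
    (adjMat n G + γ • (1 : Matrix (Fin n) (Fin n) ℝ))
    ((-(k : ℝ)) • (1 : Matrix (Fin n) (Fin n) ℝ))
    (((k : ℝ)) • (1 : Matrix (Fin n) (Fin n) ℝ))
    (0 : Matrix (Fin n) (Fin n) ℝ)

/-- The column player's payoff matrix of the game `𝒢(k, γ)`:
`C = ½ [[A + γ Iₙ, k Iₙ], [−k Iₙ, 0ₙ]]`. -/
noncomputable def Cmat (n : ℕ) (G : SimpleGraph (Fin n)) [DecidableRel G.Adj]
    (k : ℕ) (γ : ℝ) : Matrix (Fin n ⊕ Fin n) (Fin n ⊕ Fin n) ℝ :=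
  (1 / 2 : ℝ) • Matrix.fromBlocks
    (adjMat n G + γ • (1 : Matrix (Fin n) (Fin n) ℝ))
    (((k : ℝ)) • (1 : Matrix (Fin n) (Fin n) ℝ))
    ((-(k : ℝ)) • (1 : Matrix (Fin n) (Fin n) ℝ))
    (0 : Matrix (Fin n) (Fin n) ℝ)

/-- if `G` contains a clique of size `k` and `T ∣ k`, then for any `γ > 0` the
game `𝒢(k, γ)` admits a uniform `T`-sparse (exact) CCE with welfare exactly `1 + γT/k`. -/
theorem stmt2 (n : ℕ) (G : SimpleGraph (Fin n)) [DecidableRel G.Adj]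
    (k T : ℕ) (hk : 0 < k) (hT : 0 < T) (hdvd : T ∣ k)
    (s : Finset (Fin n)) (hclique : G.IsNClique k s)
    (γ : ℝ) (hγ : 0 < γ) :
    ∃ x y : Fin T → (Fin n ⊕ Fin n) → ℝ,
      (∀ t, IsDist (x t)) ∧ (∀ t, IsDist (y t)) ∧
      IsCCE (Rmat n G k γ) (Cmat n G k γ)
        (fun a b => (1 / (T : ℝ)) * ∑ t, x t a * y t b) 0 ∧
      sw (Rmat n G k γ) (Cmat n G k γ)
        (fun a b => (1 / (T : ℝ)) * ∑ t, x t a * y t b) = 1 + γ * T / k := by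

  classical
  obtain ⟨m, hm⟩ := hdvd
  have hmpos : 0 < m := by
    rcases Nat.eq_zero_or_pos m with h | h
    · subst h; simp at hm; omega
    · exact h
  have hcard : s.card = k := hclique.2
  have hmR : (0:ℝ) < m := by exact_mod_cast hmpos
  have hTR : (0:ℝ) < T := by exact_mod_cast hT
  have hkR : (0:ℝ) < k := by exact_mod_cast hk
  have hkTm : (k:ℝ) = T * m := by exact_mod_cast hm
  have hbound : ∀ (t : Fin T) (j : Fin m), t.1 * m + j.1 < k := by
    intro t j
    have h1 : t.1 * m + j.1 < (t.1 + 1) * m := by nlinarith [j.2]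
    have h2 : (t.1 + 1) * m ≤ T * m := Nat.mul_le_mul_right m t.2
    omega
  set f : Fin T → Fin m → Fin n :=
    fun t j => (s.orderIsoOfFin hcard ⟨t.1 * m + j.1, hbound t j⟩ : Fin n) with hf
  have hfs : ∀ t j, f t j ∈ s := fun t j => (s.orderIsoOfFin hcard _).2
  have hfinj : ∀ t j t' j', f t j = f t' j' → t = t' ∧ j = j' := by
    intro t j t' j' h
    have h1 : (⟨t.1 * m + j.1, hbound t j⟩ : Fin k) = ⟨t'.1 * m + j'.1, hbound t' j'⟩ :=
      (s.orderIsoOfFin hcard).injective (Subtype.ext h)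
    have h2 : t.1 * m + j.1 = t'.1 * m + j'.1 := congrArg Fin.val h1
    have key : ∀ a b : ℕ, b < m → (a * m + b) / m = a := by
      intro a b hb
      rw [mul_comm, Nat.mul_add_div (by omega), Nat.div_eq_of_lt hb, Nat.add_zero]
    have ht : t.1 = t'.1 := by rw [← key t.1 j.1 j.2, h2, key t'.1 j'.1 j'.2]
    have hj : j.1 = j'.1 := by rw [ht] at h2; omega
    exact ⟨Fin.ext ht, Fin.ext hj⟩
  -- the distribution
  set x : Fin T → (Fin n ⊕ Fin n) → ℝ :=
    fun t a => (m:ℝ)⁻¹ * ∑ j, if a = Sum.inl (f t j) then 1 else 0 with hx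
  have hA : ∀ (t : Fin T) (g : (Fin n ⊕ Fin n) → ℝ),
      ∑ a, x t a * g a = (m:ℝ)⁻¹ * ∑ j, g (Sum.inl (f t j)) := by
    intro t g
    calc ∑ a, x t a * g a
        = ∑ a, ∑ j, (m:ℝ)⁻¹ * (if a = Sum.inl (f t j) then g a else 0) := by
          refine Finset.sum_congr rfl fun a _ => ?_
          simp only [hx, Finset.sum_mul, Finset.mul_sum, ite_mul, one_mul, zero_mul, mul_assoc]
      _ = ∑ j, ∑ a, (m:ℝ)⁻¹ * (if a = Sum.inl (f t j) then g a else 0) := Finset.sum_comm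
      _ = (m:ℝ)⁻¹ * ∑ j, g (Sum.inl (f t j)) := by
          rw [Finset.mul_sum]
          refine Finset.sum_congr rfl fun j _ => ?_
          rw [← Finset.mul_sum]
          congr 1
          simp
  have hxdist : ∀ t, IsDist (x t) := by
    intro t
    constructor
    · intro a
      apply mul_nonneg (by positivity)
      apply Finset.sum_nonneg
      intro j _
      split <;> norm_num
    · have := hA t (fun _ => 1)
      simpa [Finset.card_univ, inv_mul_cancel₀ hmR.ne'] using this
  have hxsum : ∀ t, ∑ a, x t a = 1 := fun t => (hxdist t).2
  -- key rearrangement lemmas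
  have hkey : ∀ M : (Fin n ⊕ Fin n) → (Fin n ⊕ Fin n) → ℝ,
      (∑ a, ∑ b, ((1:ℝ)/(T:ℝ) * ∑ t, x t a * x t b) * M a b)
      = (1/(T:ℝ)) * ∑ t, (m:ℝ)⁻¹ * ∑ j, (m:ℝ)⁻¹ *
          ∑ j', M (Sum.inl (f t j)) (Sum.inl (f t j')) := by
    intro M
    have step1 : ∀ a b, ((1:ℝ)/(T:ℝ) * ∑ t, x t a * x t b) * M a b
        = ∑ t, (1:ℝ)/(T:ℝ) * (x t a * (x t b * M a b)) := by
      intro a b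
      rw [mul_assoc, Finset.sum_mul, Finset.mul_sum]
      exact Finset.sum_congr rfl fun t _ => by ring
    calc (∑ a, ∑ b, ((1:ℝ)/(T:ℝ) * ∑ t, x t a * x t b) * M a b)
        = ∑ a, ∑ b, ∑ t, (1:ℝ)/(T:ℝ) * (x t a * (x t b * M a b)) := by
          exact Finset.sum_congr rfl fun a _ => Finset.sum_congr rfl fun b _ => step1 a b
      _ = ∑ a, ∑ t, ∑ b, (1:ℝ)/(T:ℝ) * (x t a * (x t b * M a b)) :=
          Finset.sum_congr rfl fun a _ => Finset.sum_comm
      _ = ∑ t, ∑ a, ∑ b, (1:ℝ)/(T:ℝ) * (x t a * (x t b * M a b)) := Finset.sum_comm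
      _ = ∑ t, (1:ℝ)/(T:ℝ) * (∑ a, x t a * (∑ b, x t b * M a b)) := by
          refine Finset.sum_congr rfl fun t _ => ?_
          rw [Finset.mul_sum]
          refine Finset.sum_congr rfl fun a _ => ?_
          rw [Finset.mul_sum, Finset.mul_sum]
      _ = (1/(T:ℝ)) * ∑ t, (m:ℝ)⁻¹ * ∑ j, (m:ℝ)⁻¹ *
            ∑ j', M (Sum.inl (f t j)) (Sum.inl (f t j')) := by
          rw [Finset.mul_sum]
          refine Finset.sum_congr rfl fun t _ => ?_
          congr 1
          rw [hA t (fun a => ∑ b, x t b * M a b)]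
          congr 1
          exact Finset.sum_congr rfl fun j _ => hA t (fun b => M (Sum.inl (f t j)) b)
  have hdevR : ∀ g : (Fin n ⊕ Fin n) → ℝ,
      (∑ a, ∑ b, ((1:ℝ)/(T:ℝ) * ∑ t, x t a * x t b) * g b)
      = (1/(T:ℝ)) * ((m:ℝ)⁻¹ * ∑ t, ∑ j, g (Sum.inl (f t j))) := by
    intro g
    rw [hkey (fun _ b => g b)]
    congr 1
    rw [Finset.mul_sum]
    refine Finset.sum_congr rfl fun t _ => ?_
    rw [Finset.sum_const, Finset.card_univ, Fintype.card_fin, nsmul_eq_mul, ← mul_assoc,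
      inv_mul_cancel₀ hmR.ne', one_mul]
  have hdevC : ∀ g : (Fin n ⊕ Fin n) → ℝ,
      (∑ a, ∑ b, ((1:ℝ)/(T:ℝ) * ∑ t, x t a * x t b) * g a)
      = (1/(T:ℝ)) * ((m:ℝ)⁻¹ * ∑ t, ∑ j, g (Sum.inl (f t j))) := by
    intro g
    rw [hkey (fun a _ => g a)]
    congr 1
    rw [Finset.mul_sum]
    refine Finset.sum_congr rfl fun t _ => ?_
    congr 1
    refine Finset.sum_congr rfl fun j _ => ?_
    rw [Finset.sum_const, Finset.card_univ, Fintype.card_fin, nsmul_eq_mul, ← mul_assoc,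
      inv_mul_cancel₀ hmR.ne', one_mul]

  -- matrix entries
  have hR11 : ∀ i i', Rmat n G k γ (Sum.inl i) (Sum.inl i')
      = (1/2) * (adjMat n G i i' + γ * (if i = i' then 1 else 0)) := by
    intro i i'; simp [Rmat, Matrix.one_apply]
  have hR21 : ∀ i i', Rmat n G k γ (Sum.inr i) (Sum.inl i')
      = (1/2) * ((k:ℝ) * (if i = i' then 1 else 0)) := by
    intro i i'; simp [Rmat, Matrix.one_apply]
  have hC11 : ∀ i i', Cmat n G k γ (Sum.inl i) (Sum.inl i')
      = (1/2) * (adjMat n G i i' + γ * (if i = i' then 1 else 0)) := by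
    intro i i'; simp [Cmat, Matrix.one_apply]
  have hC12 : ∀ i i', Cmat n G k γ (Sum.inl i) (Sum.inr i')
      = (1/2) * ((k:ℝ) * (if i = i' then 1 else 0)) := by
    intro i i'; simp [Cmat, Matrix.one_apply]
  have hadj_le : ∀ i i' : Fin n, adjMat n G i i' ≤ 1 := by
    intro i i'; unfold adjMat; split <;> norm_num
  have hadj1 : ∀ (t t' : Fin T) (j j' : Fin m), adjMat n G (f t j) (f t' j') = 1 := by
    intro t t' j j'
    unfold adjMat
    rw [if_pos]
    by_cases h : f t j = f t' j'
    · exact Or.inl h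
    · exact Or.inr (hclique.1 (hfs t j) (hfs t' j') h)
  have hdelta : ∀ (t : Fin T) (j j' : Fin m),
      (if (f t j : Fin n) = f t j' then (1:ℝ) else 0) = if j = j' then 1 else 0 := by
    intro t j j'
    by_cases h : j = j'
    · subst h; simp
    · rw [if_neg, if_neg h]; intro he; exact h (hfinj t j t j' he).2
  -- the basic double-average computation
  have hsum : ∀ c d : ℝ,
      (m:ℝ)⁻¹ * ∑ j : Fin m, (m:ℝ)⁻¹ *
        ∑ j' : Fin m, (c + d * (if j = j' then (1:ℝ) else 0)) = c + d * (m:ℝ)⁻¹ := by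
    intro c d
    have inner : ∀ j : Fin m,
        ∑ j' : Fin m, (c + d * (if j = j' then (1:ℝ) else 0)) = (m:ℝ) * c + d := by
      intro j
      rw [Finset.sum_add_distrib, Finset.sum_const, ← Finset.mul_sum]
      simp [Finset.card_univ, mul_comm]
    calc (m:ℝ)⁻¹ * ∑ j : Fin m, (m:ℝ)⁻¹ *
          ∑ j' : Fin m, (c + d * (if j = j' then (1:ℝ) else 0))
        = (m:ℝ)⁻¹ * ∑ _j : Fin m, (m:ℝ)⁻¹ * ((m:ℝ) * c + d) := by
          exact congrArg _ (Finset.sum_congr rfl fun j _ => congrArg _ (inner j))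
      _ = c + d * (m:ℝ)⁻¹ := by
          rw [Finset.sum_const, Finset.card_univ, Fintype.card_fin, nsmul_eq_mul]
          field_simp
  have hval_gen : ∀ (M : (Fin n ⊕ Fin n) → (Fin n ⊕ Fin n) → ℝ) (c d : ℝ),
      (∀ t j j', M (Sum.inl (f t j)) (Sum.inl (f t j'))
        = c + d * (if j = j' then (1:ℝ) else 0)) →
      (∑ a, ∑ b, ((1:ℝ)/(T:ℝ) * ∑ t, x t a * x t b) * M a b) = c + d * (m:ℝ)⁻¹ := by
    intro M c d hM
    rw [hkey M]
    have ht : ∀ t : Fin T, (m:ℝ)⁻¹ * ∑ j, (m:ℝ)⁻¹ *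
        ∑ j', M (Sum.inl (f t j)) (Sum.inl (f t j')) = c + d * (m:ℝ)⁻¹ := by
      intro t
      rw [← hsum c d]
      exact congrArg _ (Finset.sum_congr rfl fun j _ =>
        congrArg _ (Finset.sum_congr rfl fun j' _ => hM t j j'))
    rw [Finset.sum_congr rfl fun t _ => ht t, Finset.sum_const, Finset.card_univ,
      Fintype.card_fin, nsmul_eq_mul, ← mul_assoc, one_div, inv_mul_cancel₀ hTR.ne', one_mul]
  have hvalR : (∑ a, ∑ b, ((1:ℝ)/(T:ℝ) * ∑ t, x t a * x t b) * Rmat n G k γ a b)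
      = 1/2 + γ/2 * (m:ℝ)⁻¹ := by
    refine hval_gen _ (1/2) (γ/2) fun t j j' => ?_
    rw [hR11, hadj1, hdelta]
    split_ifs <;> ring
  have hvalC : (∑ a, ∑ b, ((1:ℝ)/(T:ℝ) * ∑ t, x t a * x t b) * Cmat n G k γ a b)
      = 1/2 + γ/2 * (m:ℝ)⁻¹ := by
    refine hval_gen _ (1/2) (γ/2) fun t j j' => ?_
    rw [hC11, hadj1, hdelta]
    split_ifs <;> ring
  have hswval : (∑ a, ∑ b, ((1:ℝ)/(T:ℝ) * ∑ t, x t a * x t b) *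
      (Rmat n G k γ a b + Cmat n G k γ a b)) = 1 + γ * (m:ℝ)⁻¹ := by
    have := hval_gen (fun a b => Rmat n G k γ a b + Cmat n G k γ a b) 1 γ (fun t j j' => by
      rw [hR11, hC11, hadj1, hdelta]
      split_ifs <;> ring)
    simpa using this
  -- deviation bounds
  have hT1 : (1:ℝ) ≤ T := by exact_mod_cast hT
  have hDbound : ∀ i : Fin n, (∑ t, ∑ j, if i = f t j then (1:ℝ) else 0) ≤ 1 := by
    intro i
    have e : (∑ t, ∑ j, if i = f t j then (1:ℝ) else 0)
        = ∑ p : Fin T × Fin m, if i = f p.1 p.2 then (1:ℝ) else 0 :=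
      (Fintype.sum_prod_type
        (f := fun p : Fin T × Fin m => if i = f p.1 p.2 then (1:ℝ) else 0)).symm
    rw [e, Finset.sum_boole]
    have hc : (Finset.univ.filter fun p : Fin T × Fin m => i = f p.1 p.2).card ≤ 1 := by
      refine Finset.card_le_one.mpr ?_
      intro p hp q hq
      simp only [Finset.mem_filter] at hp hq
      have hpq : f p.1 p.2 = f q.1 q.2 := by rw [← hp.2, ← hq.2]
      have := hfinj p.1 p.2 q.1 q.2 hpq
      exact Prod.ext this.1 this.2
    exact_mod_cast hc
  have hDnn : ∀ i : Fin n, (0:ℝ) ≤ ∑ t, ∑ j, if i = f t j then (1:ℝ) else 0 := by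
    intro i
    refine Finset.sum_nonneg fun t _ => Finset.sum_nonneg fun j _ => ?_
    split <;> norm_num
  have hones : (∑ _t : Fin T, ∑ _j : Fin m, (1:ℝ)) = (T:ℝ) * (m:ℝ) := by
    simp [Finset.card_univ, mul_comm]
  have hrow : ∀ a', (∑ a, ∑ b, ((1:ℝ)/(T:ℝ) * ∑ t, x t a * x t b) * Rmat n G k γ a' b)
      ≤ 1/2 + γ/2 * (m:ℝ)⁻¹ := by
    intro a'
    rw [hdevR (fun b => Rmat n G k γ a' b)]
    cases a' with
    | inl i =>
      have hsplit : (∑ t, ∑ j, Rmat n G k γ (Sum.inl i) (Sum.inl (f t j)))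
          = (1/2) * (∑ t, ∑ j, adjMat n G i (f t j))
            + (γ/2) * (∑ t, ∑ j, if i = f t j then (1:ℝ) else 0) := by
        rw [Finset.mul_sum, Finset.mul_sum, ← Finset.sum_add_distrib]
        refine Finset.sum_congr rfl fun t _ => ?_
        rw [Finset.mul_sum, Finset.mul_sum, ← Finset.sum_add_distrib]
        refine Finset.sum_congr rfl fun j _ => ?_
        rw [hR11]; ring
      have hadjsum : (∑ t, ∑ j, adjMat n G i (f t j)) ≤ (T:ℝ) * (m:ℝ) := by
        calc (∑ t, ∑ j, adjMat n G i (f t j)) ≤ ∑ _t : Fin T, ∑ _j : Fin m, (1:ℝ) :=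
              Finset.sum_le_sum fun t _ => Finset.sum_le_sum fun j _ => hadj_le i (f t j)
          _ = (T:ℝ) * (m:ℝ) := hones
      have hS : (∑ t, ∑ j, Rmat n G k γ (Sum.inl i) (Sum.inl (f t j)))
          ≤ (T:ℝ) * (m:ℝ) * (1/2) + γ/2 := by
        rw [hsplit]
        have h1 := hDbound i
        nlinarith [hγ.le]
      calc (1/(T:ℝ)) * ((m:ℝ)⁻¹ * ∑ t, ∑ j, Rmat n G k γ (Sum.inl i) (Sum.inl (f t j)))
          ≤ (1/(T:ℝ)) * ((m:ℝ)⁻¹ * ((T:ℝ) * (m:ℝ) * (1/2) + γ/2)) := by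
            apply mul_le_mul_of_nonneg_left _ (by positivity)
            exact mul_le_mul_of_nonneg_left hS (by positivity)
        _ = 1/2 + γ/2 * ((T:ℝ) * (m:ℝ))⁻¹ := by
            rw [mul_inv]
            linear_combination ((1/2) * ((m:ℝ)⁻¹*(m:ℝ))) * inv_mul_cancel₀ hTR.ne'
              + (1/2) * inv_mul_cancel₀ hmR.ne'
        _ ≤ 1/2 + γ/2 * (m:ℝ)⁻¹ := by
            have h2 : ((T:ℝ) * (m:ℝ))⁻¹ ≤ (m:ℝ)⁻¹ := by
              apply inv_anti₀ hmR
              nlinarith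
            nlinarith [hγ.le]
    | inr i =>
      have hsplit : (∑ t, ∑ j, Rmat n G k γ (Sum.inr i) (Sum.inl (f t j)))
          = ((k:ℝ)/2) * (∑ t, ∑ j, if i = f t j then (1:ℝ) else 0) := by
        rw [Finset.mul_sum]
        refine Finset.sum_congr rfl fun t _ => ?_
        rw [Finset.mul_sum]
        refine Finset.sum_congr rfl fun j _ => ?_
        rw [hR21]; ring
      have hS : (∑ t, ∑ j, Rmat n G k γ (Sum.inr i) (Sum.inl (f t j))) ≤ (k:ℝ)/2 := by
        rw [hsplit]
        have h1 := hDbound i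
        nlinarith [hkR]
      calc (1/(T:ℝ)) * ((m:ℝ)⁻¹ * ∑ t, ∑ j, Rmat n G k γ (Sum.inr i) (Sum.inl (f t j)))
          ≤ (1/(T:ℝ)) * ((m:ℝ)⁻¹ * ((k:ℝ)/2)) := by
            apply mul_le_mul_of_nonneg_left _ (by positivity)
            exact mul_le_mul_of_nonneg_left hS (by positivity)
        _ = 1/2 := by
            rw [hkTm]
            linear_combination ((1/2) * ((m:ℝ)⁻¹*(m:ℝ))) * inv_mul_cancel₀ hTR.ne'
              + (1/2) * inv_mul_cancel₀ hmR.ne'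
        _ ≤ 1/2 + γ/2 * (m:ℝ)⁻¹ := by nlinarith [hγ.le, inv_nonneg.mpr hmR.le]

  have hcol : ∀ b', (∑ a, ∑ b, ((1:ℝ)/(T:ℝ) * ∑ t, x t a * x t b) * Cmat n G k γ a b')
      ≤ 1/2 + γ/2 * (m:ℝ)⁻¹ := by
    intro b'
    rw [hdevC (fun a => Cmat n G k γ a b')]
    cases b' with
    | inl i =>
      have hsplit : (∑ t, ∑ j, Cmat n G k γ (Sum.inl (f t j)) (Sum.inl i))
          = (1/2) * (∑ t, ∑ j, adjMat n G (f t j) i)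
            + (γ/2) * (∑ t, ∑ j, if i = f t j then (1:ℝ) else 0) := by
        rw [Finset.mul_sum, Finset.mul_sum, ← Finset.sum_add_distrib]
        refine Finset.sum_congr rfl fun t _ => ?_
        rw [Finset.mul_sum, Finset.mul_sum, ← Finset.sum_add_distrib]
        refine Finset.sum_congr rfl fun j _ => ?_
        rw [hC11]
        have e : (if (f t j : Fin n) = i then (1:ℝ) else 0) = if i = f t j then 1 else 0 := by
          simp [eq_comm]
        rw [e]; ring
      have hadjsum : (∑ t, ∑ j, adjMat n G (f t j) i) ≤ (T:ℝ) * (m:ℝ) := by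
        calc (∑ t, ∑ j, adjMat n G (f t j) i) ≤ ∑ _t : Fin T, ∑ _j : Fin m, (1:ℝ) :=
              Finset.sum_le_sum fun t _ => Finset.sum_le_sum fun j _ => hadj_le (f t j) i
          _ = (T:ℝ) * (m:ℝ) := hones
      have hS : (∑ t, ∑ j, Cmat n G k γ (Sum.inl (f t j)) (Sum.inl i))
          ≤ (T:ℝ) * (m:ℝ) * (1/2) + γ/2 := by
        rw [hsplit]
        have h1 := hDbound i
        nlinarith [hγ.le]
      calc (1/(T:ℝ)) * ((m:ℝ)⁻¹ * ∑ t, ∑ j, Cmat n G k γ (Sum.inl (f t j)) (Sum.inl i))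
          ≤ (1/(T:ℝ)) * ((m:ℝ)⁻¹ * ((T:ℝ) * (m:ℝ) * (1/2) + γ/2)) := by
            apply mul_le_mul_of_nonneg_left _ (by positivity)
            exact mul_le_mul_of_nonneg_left hS (by positivity)
        _ = 1/2 + γ/2 * ((T:ℝ) * (m:ℝ))⁻¹ := by
            rw [mul_inv]
            linear_combination ((1/2) * ((m:ℝ)⁻¹*(m:ℝ))) * inv_mul_cancel₀ hTR.ne'
              + (1/2) * inv_mul_cancel₀ hmR.ne'
        _ ≤ 1/2 + γ/2 * (m:ℝ)⁻¹ := by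
            have h2 : ((T:ℝ) * (m:ℝ))⁻¹ ≤ (m:ℝ)⁻¹ := by
              apply inv_anti₀ hmR
              nlinarith
            nlinarith [hγ.le]
    | inr i =>
      have hsplit : (∑ t, ∑ j, Cmat n G k γ (Sum.inl (f t j)) (Sum.inr i))
          = ((k:ℝ)/2) * (∑ t, ∑ j, if i = f t j then (1:ℝ) else 0) := by
        rw [Finset.mul_sum]
        refine Finset.sum_congr rfl fun t _ => ?_
        rw [Finset.mul_sum]
        refine Finset.sum_congr rfl fun j _ => ?_
        rw [hC12]
        have e : (if (f t j : Fin n) = i then (1:ℝ) else 0) = if i = f t j then 1 else 0 := by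
          simp [eq_comm]
        rw [e]; ring
      have hS : (∑ t, ∑ j, Cmat n G k γ (Sum.inl (f t j)) (Sum.inr i)) ≤ (k:ℝ)/2 := by
        rw [hsplit]
        have h1 := hDbound i
        nlinarith [hkR]
      calc (1/(T:ℝ)) * ((m:ℝ)⁻¹ * ∑ t, ∑ j, Cmat n G k γ (Sum.inl (f t j)) (Sum.inr i))
          ≤ (1/(T:ℝ)) * ((m:ℝ)⁻¹ * ((k:ℝ)/2)) := by
            apply mul_le_mul_of_nonneg_left _ (by positivity)
            exact mul_le_mul_of_nonneg_left hS (by positivity)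
        _ = 1/2 := by
            rw [hkTm]
            linear_combination ((1/2) * ((m:ℝ)⁻¹*(m:ℝ))) * inv_mul_cancel₀ hTR.ne'
              + (1/2) * inv_mul_cancel₀ hmR.ne'
        _ ≤ 1/2 + γ/2 * (m:ℝ)⁻¹ := by nlinarith [hγ.le, inv_nonneg.mpr hmR.le]
  refine ⟨x, x, hxdist, hxdist, ?_, ?_⟩
  · simp only [IsCCE, ge_iff_le, sub_zero]
    constructor
    · intro a'
      rw [hvalR]
      exact hrow a'
    · intro b'
      rw [hvalC]
      exact hcol b'
  · simp only [sw]
    rw [hswval, hkTm, div_eq_mul_inv, mul_inv]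
    linear_combination (-(γ * (m:ℝ)⁻¹)) * mul_inv_cancel₀ hTR.ne'
end

section
/- Let k ∈ ℕ, ℓ > 0, and 0 < γ ≤ 1/(90 k) (so that 1 + 6kγ ≤ 16/15). Let x, y ∈ ℝ^n satisfy ⟨x, y⟩ ≥ 1/ℓ, ‖x‖² ≤ (1 + 6kγ)/ℓ, and ‖x − y‖² ≤ 15 k² γ / ℓ. Then ‖x‖² ≥ (1 − 4k√γ)/ℓ, where ‖·‖ is the Euclidean norm and ⟨·,·⟩ the Euclidean inner product. -/
set_option maxHeartbeats 1000000 in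
/-- the intermediate estimate (eq:lb-x2norm). -/
theorem stmt8 (n : ℕ) (k : ℕ) (ℓ γ : ℝ) (hℓ : 0 < ℓ)
    (hγ0 : 0 < γ) (hγ : γ ≤ 1 / (90 * (k : ℝ)))
    (x y : Fin n → ℝ)
    (hxy : 1 / ℓ ≤ ∑ i, x i * y i)
    (hx2 : ∑ i, (x i) ^ 2 ≤ (1 + 6 * (k : ℝ) * γ) / ℓ)
    (hdist : ∑ i, (x i - y i) ^ 2 ≤ 15 * (k : ℝ) ^ 2 * γ / ℓ) :
    (1 - 4 * (k : ℝ) * Real.sqrt γ) / ℓ ≤ ∑ i, (x i) ^ 2 := by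
  have hk : 1 ≤ (k : ℝ) := by
    rcases Nat.eq_zero_or_pos k with hk0 | hk0
    · exfalso; rw [hk0] at hγ; simp at hγ; linarith
    · exact_mod_cast hk0
  have hsγ : Real.sqrt γ ^ 2 = γ := Real.sq_sqrt hγ0.le
  have hsγ0 : 0 ≤ Real.sqrt γ := Real.sqrt_nonneg γ
  set a := ∑ i, (x i) ^ 2 with ha
  have ha0 : 0 ≤ a := Finset.sum_nonneg fun i _ => sq_nonneg _
  by_cases h : 1 / ℓ ≤ a
  · have : (1 - 4 * (k : ℝ) * Real.sqrt γ) / ℓ ≤ 1 / ℓ := by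
      gcongr
      nlinarith
    linarith
  · push_neg at h
    set d := ∑ i, (x i - y i) ^ 2 with hd
    have hd0 : 0 ≤ d := Finset.sum_nonneg fun i _ => sq_nonneg _
    have hcs : (∑ i, x i * (y i - x i)) ^ 2 ≤ a * d := by
      have h2 : (∑ i, x i * (y i - x i)) ^ 2 ≤
          (∑ i, (x i) ^ 2) * (∑ i, (y i - x i) ^ 2) := by
        have := Finset.sum_mul_sq_le_sq_mul_sq Finset.univ x (fun i => y i - x i)
        simpa [pow_two] using this
      have h3 : (∑ i, (y i - x i) ^ 2) = d := by
        rw [hd]; apply Finset.sum_congr rfl; intro i _; ring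
      rw [h3] at h2; exact h2
    have hsum : (∑ i, x i * (y i - x i)) = (∑ i, x i * y i) - a := by
      rw [ha, ← Finset.sum_sub_distrib]
      apply Finset.sum_congr rfl; intro i _; ring
    have hgap : 1 / ℓ - a ≤ (∑ i, x i * y i) - a := by linarith
    have hgap0 : 0 ≤ 1 / ℓ - a := by linarith
    have hkey : (1 / ℓ - a) ^ 2 ≤ a * d := by
      nlinarith [hcs, hsum]
    -- bound a * d
    have hγk : 6 * (k : ℝ) * γ ≤ 1 / 15 := by
      have h90 : (0:ℝ) < 90 * k := by positivity
      rw [le_div_iff₀ h90] at hγ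
      nlinarith
    have hab : a ≤ (16 / 15) / ℓ := by
      apply hx2.trans
      gcongr
      linarith
    have hProd : a * d ≤ (4 * (k : ℝ) * Real.sqrt γ / ℓ) ^ 2 := by
      have hdγ : 0 ≤ 15 * (k : ℝ) ^ 2 * γ / ℓ := by positivity
      have : a * d ≤ ((16 / 15) / ℓ) * (15 * (k : ℝ) ^ 2 * γ / ℓ) := by
        apply mul_le_mul hab hdist hd0 (by positivity)
      apply this.trans
      rw [div_pow, mul_pow, mul_pow]
      rw [hsγ]
      field_simp
      ring_nf
      nlinarith [sq_nonneg ((k:ℝ) * γ / ℓ)]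
    have hfin : 1 / ℓ - a ≤ 4 * (k : ℝ) * Real.sqrt γ / ℓ := by
      have hr0 : 0 ≤ 4 * (k : ℝ) * Real.sqrt γ / ℓ := by positivity
      nlinarith [hkey.trans hProd]
    rw [sub_div]
    linarith
end

section
/- Let ℓ > 0 and let x, y be probability distributions on [n] such that x_i ≤ 2/ℓ and y_i ≤ 2/ℓ for all i ∈ [n], and Σ_{i=1}^n x_i y_i ≥ 1/ℓ. Then the set S := {i ∈ [n] : x_i ≥ 1/(16ℓ) and y_i ≥ 1/(16ℓ)} satisfies |S| ≥ ℓ/8. -/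
/-- extracting a large set from a near-diagonal product distribution. -/
theorem stmt9 (n : ℕ) (ℓ : ℝ) (hℓ : 0 < ℓ) (x y : Fin n → ℝ)
    (hx0 : ∀ i, 0 ≤ x i) (hxsum : ∑ i, x i = 1)
    (hy0 : ∀ i, 0 ≤ y i) (hysum : ∑ i, y i = 1)
    (hxb : ∀ i, x i ≤ 2 / ℓ) (hyb : ∀ i, y i ≤ 2 / ℓ)
    (hxy : 1 / ℓ ≤ ∑ i, x i * y i) :
    ℓ / 8 ≤ (({i : Fin n | 1 / (16 * ℓ) ≤ x i ∧ 1 / (16 * ℓ) ≤ y i} : Set (Fin n)).ncard : ℝ) := by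
  classical
  set S : Finset (Fin n) :=
    Finset.univ.filter (fun i => 1 / (16 * ℓ) ≤ x i ∧ 1 / (16 * ℓ) ≤ y i) with hSdef
  have hcard : ({i : Fin n | 1 / (16 * ℓ) ≤ x i ∧ 1 / (16 * ℓ) ≤ y i} : Set (Fin n)).ncard
      = S.card := by
    rw [← Set.ncard_coe_finset]
    congr 1
    ext i
    simp [hSdef]
  rw [hcard]
  -- split the sum
  have hsplit : ∑ i, x i * y i = ∑ i ∈ S, x i * y i + ∑ i ∈ Sᶜ, x i * y i := by
    rw [Finset.sum_add_sum_compl]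
  have h1 : ∑ i ∈ S, x i * y i ≤ S.card * (4 / ℓ ^ 2) := by
    calc ∑ i ∈ S, x i * y i ≤ ∑ i ∈ S, (4 / ℓ ^ 2) := by
          apply Finset.sum_le_sum
          intro i _
          have := mul_le_mul (hxb i) (hyb i) (hy0 i) (by positivity)
          calc x i * y i ≤ 2 / ℓ * (2 / ℓ) := this
            _ = 4 / ℓ ^ 2 := by ring
      _ = S.card * (4 / ℓ ^ 2) := by rw [Finset.sum_const, nsmul_eq_mul]
  have h2 : ∑ i ∈ Sᶜ, x i * y i ≤ 1 / (8 * ℓ) := by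
    have step : ∑ i ∈ Sᶜ, x i * y i ≤ ∑ i ∈ Sᶜ, (1 / (16 * ℓ)) * (x i + y i) := by
      apply Finset.sum_le_sum
      intro i hi
      simp only [hSdef, Finset.mem_compl, Finset.mem_filter, Finset.mem_univ, true_and,
        not_and_or, not_le] at hi
      have hcpos : (0:ℝ) < 1 / (16 * ℓ) := by positivity
      rcases hi with hx | hy
      · nlinarith [hy0 i, hx0 i]
      · nlinarith [hy0 i, hx0 i]
    have step2 : ∑ i ∈ Sᶜ, (1 / (16 * ℓ)) * (x i + y i)
        ≤ (1 / (16 * ℓ)) * 2 := by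
      rw [← Finset.mul_sum]
      apply mul_le_mul_of_nonneg_left _ (by positivity)
      have hxle : ∑ i ∈ Sᶜ, x i ≤ 1 := by
        rw [← hxsum]
        exact Finset.sum_le_sum_of_subset_of_nonneg (Finset.subset_univ _)
          (fun i _ _ => hx0 i)
      have hyle : ∑ i ∈ Sᶜ, y i ≤ 1 := by
        rw [← hysum]
        exact Finset.sum_le_sum_of_subset_of_nonneg (Finset.subset_univ _)
          (fun i _ _ => hy0 i)
      rw [Finset.sum_add_distrib]
      linarith
    calc ∑ i ∈ Sᶜ, x i * y i ≤ (1 / (16 * ℓ)) * 2 := le_trans step step2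
      _ = 1 / (8 * ℓ) := by field_simp; ring
  have key : 1 / ℓ ≤ (S.card : ℝ) * (4 / ℓ ^ 2) + 1 / (8 * ℓ) := by
    rw [hsplit] at hxy
    linarith
  have hc : (0:ℝ) ≤ (S.card : ℝ) := Nat.cast_nonneg _
  have hℓ2 : (0:ℝ) < ℓ ^ 2 := by positivity
  have hne : ℓ ≠ 0 := ne_of_gt hℓ
  have h := mul_le_mul_of_nonneg_right key hℓ2.le
  have e1 : 1 / ℓ * ℓ ^ 2 = ℓ := by field_simp
  have e2 : ((S.card : ℝ) * (4 / ℓ ^ 2) + 1 / (8 * ℓ)) * ℓ ^ 2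
      = (S.card : ℝ) * 4 + ℓ / 8 := by field_simp
  rw [e1, e2] at h
  linarith
end

section
/- Let G be an undirected n-node graph, k, T ∈ ℕ, γ > 0, and ε ∈ (0, 1/2). Consider the (2n+1)×(2n+1) game G''(k,γ,ε) obtained from G(k,γ) by adding an action O for each player, where both players receive utility ε under (O,O), and where if exactly one player plays O that player receives r := (1 + γT/k)/2 and the other player receives −r. Then: (1) (O,O) is a pure Nash equilibrium of G''(k,γ,ε), under which both players obtain utility ε; and (2) if G contains a clique of size k and k/T ∈ ℕ, then G''(k,γ,ε) admits a uniform T-sparse CCE supported only on the actions [n]×[n] under which each player obtains expected utility r ≥ 1/2. -/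
/-- Row payoff matrix of `𝒢''(k, γ, ε)`: add an action `O` to `𝒢(k, γ)`; both players get `ε`
under `(O, O)`; the player playing `O` alone gets `r := (1 + γT/k)/2` and the other `−r`. -/
noncomputable def Rmat2 (n : ℕ) (G : SimpleGraph (Fin n)) [DecidableRel G.Adj]
    (k T : ℕ) (γ ε : ℝ) :
    Matrix ((Fin n ⊕ Fin n) ⊕ Unit) ((Fin n ⊕ Fin n) ⊕ Unit) ℝ :=
  fun a b =>
    match a, b with
    | Sum.inl a, Sum.inl b => Rmat n G k γ a b
    | Sum.inr _, Sum.inl _ => (1 + γ * (T : ℝ) / (k : ℝ)) / 2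
    | Sum.inl _, Sum.inr _ => -((1 + γ * (T : ℝ) / (k : ℝ)) / 2)
    | Sum.inr _, Sum.inr _ => ε

/-- Column payoff matrix of `𝒢''(k, γ, ε)`. -/
noncomputable def Cmat2 (n : ℕ) (G : SimpleGraph (Fin n)) [DecidableRel G.Adj]
    (k T : ℕ) (γ ε : ℝ) :
    Matrix ((Fin n ⊕ Fin n) ⊕ Unit) ((Fin n ⊕ Fin n) ⊕ Unit) ℝ :=
  fun a b =>
    match a, b with
    | Sum.inl a, Sum.inl b => Cmat n G k γ a b
    | Sum.inr _, Sum.inl _ => -((1 + γ * (T : ℝ) / (k : ℝ)) / 2)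
    | Sum.inl _, Sum.inr _ => (1 + γ * (T : ℝ) / (k : ℝ)) / 2
    | Sum.inr _, Sum.inr _ => ε

section Aux

private theorem div_interval (j m t : ℕ) (hm : 0 < m) : j / m = t ↔ t * m ≤ j ∧ j < t * m + m := by
  constructor
  · rintro rfl
    exact ⟨Nat.div_mul_le_self j m, by nlinarith [Nat.div_add_mod j m, Nat.mod_lt j hm]⟩
  · rintro ⟨h1, h2⟩
    exact Nat.div_eq_of_lt_le h1 (by nlinarith)

private theorem sum_ite_card {α : Type*} [Fintype α] (P : α → Prop) [DecidablePred P]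
    (c : ℝ) : ∑ j, (if P j then c else 0) = (Finset.univ.filter P).card * c := by
  rw [Finset.sum_ite, Finset.sum_const_zero, Finset.sum_const, add_zero, nsmul_eq_mul]

end Aux
set_option maxHeartbeats 1000000 in

/-- basic properties of the game `𝒢''(k, γ, ε)`:
(1) `(O, O)` is a pure Nash equilibrium giving each player utility `ε`; and
(2) if `G` has a `k`-clique and `T ∣ k`, then there is a uniform `T`-sparse CCE supported only
on `[n] × [n]` under which each player obtains expected utility `r = (1 + γT/k)/2 ≥ 1/2`. -/
theorem stmt12 (n k T : ℕ) (hk : 0 < k) (hT : 0 < T)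
    (G : SimpleGraph (Fin n)) [DecidableRel G.Adj]
    (γ ε : ℝ) (hγ : 0 < γ) (hε0 : 0 < ε) (hε1 : ε < 1 / 2) :
    -- (1) (O, O) is a pure Nash equilibrium with utility ε for both players
    ((∀ a', Rmat2 n G k T γ ε a' (Sum.inr ()) ≤ Rmat2 n G k T γ ε (Sum.inr ()) (Sum.inr ())) ∧
     (∀ b', Cmat2 n G k T γ ε (Sum.inr ()) b' ≤ Cmat2 n G k T γ ε (Sum.inr ()) (Sum.inr ())) ∧
     Rmat2 n G k T γ ε (Sum.inr ()) (Sum.inr ()) = ε ∧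
     Cmat2 n G k T γ ε (Sum.inr ()) (Sum.inr ()) = ε) ∧
    -- (2) a good uniform T-sparse CCE when G has a k-clique
    ((∃ s : Finset (Fin n), G.IsNClique k s) → T ∣ k →
      ∃ x y : Fin T → ((Fin n ⊕ Fin n) ⊕ Unit) → ℝ,
        (∀ t, IsDist (x t)) ∧ (∀ t, IsDist (y t)) ∧
        (∀ t a, (¬ ∃ i : Fin n, a = Sum.inl (Sum.inl i)) → x t a = 0) ∧
        (∀ t a, (¬ ∃ i : Fin n, a = Sum.inl (Sum.inl i)) → y t a = 0) ∧
        IsCCE (Rmat2 n G k T γ ε) (Cmat2 n G k T γ ε)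
          (fun a b => (1 / (T : ℝ)) * ∑ t, x t a * y t b) 0 ∧
        (∑ a, ∑ b, ((1 / (T : ℝ)) * ∑ t, x t a * y t b) * Rmat2 n G k T γ ε a b)
          = (1 + γ * (T : ℝ) / (k : ℝ)) / 2 ∧
        (∑ a, ∑ b, ((1 / (T : ℝ)) * ∑ t, x t a * y t b) * Cmat2 n G k T γ ε a b)
          = (1 + γ * (T : ℝ) / (k : ℝ)) / 2 ∧
        (1 : ℝ) / 2 ≤ (1 + γ * (T : ℝ) / (k : ℝ)) / 2) := by
  have hk0 : (k : ℝ) ≠ 0 := Nat.cast_ne_zero.mpr hk.ne'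
  have hT0 : (T : ℝ) ≠ 0 := Nat.cast_ne_zero.mpr hT.ne'
  have hrnn : 0 ≤ (1 + γ * (T : ℝ) / (k : ℝ)) / 2 := by positivity
  constructor
  · refine ⟨?_, ?_, rfl, rfl⟩
    · rintro ((a | a) | a)
      · show -((1 + γ * (T : ℝ) / (k : ℝ)) / 2) ≤ ε
        linarith
      · show -((1 + γ * (T : ℝ) / (k : ℝ)) / 2) ≤ ε
        linarith
      · exact le_refl _
    · rintro ((b | b) | b)
      · show -((1 + γ * (T : ℝ) / (k : ℝ)) / 2) ≤ ε
        linarith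
      · show -((1 + γ * (T : ℝ) / (k : ℝ)) / 2) ≤ ε
        linarith
      · exact le_refl _
  · rintro ⟨s, hs⟩ hdvd
    obtain ⟨m, hm⟩ := hdvd
    have hm0 : 0 < m := Nat.pos_of_ne_zero (fun h => by subst h; simp at hm; omega)
    have hm0' : (m : ℝ) ≠ 0 := Nat.cast_ne_zero.mpr hm0.ne'
    have hkm : (k : ℝ) = (T : ℝ) * (m : ℝ) := by rw [hm]; push_cast; ring
    have hcard : s.card = k := hs.2
    set f : Fin k → Fin n := fun j => s.orderEmbOfFin hcard j with hf
    have hfmem : ∀ j, f j ∈ s := fun j => s.orderEmbOfFin_mem hcard j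
    have hfinj : Function.Injective f := (s.orderEmbOfFin hcard).injective
    set F : Fin k → (Fin n ⊕ Fin n) ⊕ Unit := fun j => Sum.inl (Sum.inl (f j)) with hF
    set x : Fin T → ((Fin n ⊕ Fin n) ⊕ Unit) → ℝ :=
      fun t a => ∑ j : Fin k, if (j : ℕ) / m = (t : ℕ) ∧ a = F j then (m : ℝ)⁻¹ else 0 with hx
    -- key rewriting lemma
    have h1 : ∀ (t : Fin T) (g : ((Fin n ⊕ Fin n) ⊕ Unit) → ℝ),
        ∑ a, x t a * g a
          = ∑ j : Fin k, (if (j : ℕ) / m = (t : ℕ) then (m : ℝ)⁻¹ else 0) * g (F j) := by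
      intro t g
      simp only [hx, Finset.sum_mul]
      rw [Finset.sum_comm]
      refine Finset.sum_congr rfl fun j _ => ?_
      by_cases hj : (j : ℕ) / m = (t : ℕ)
      · simp [hj, ite_mul, Finset.sum_ite_eq']
      · simp [hj]
    -- cardinality of each block
    have hcount : ∀ t : Fin T,
        ((Finset.univ : Finset (Fin k)).filter
          (fun j : Fin k => (j : ℕ) / m = (t : ℕ))).card = m := by
      intro t
      have htT : (t : ℕ) < T := t.2
      have hexp : ((t : ℕ) + 1) * m = (t : ℕ) * m + m := by ring
      have hle : ((t : ℕ) + 1) * m ≤ T * m := Nat.mul_le_mul_right m htT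
      have hdig : ∀ j : Fin k, (j : ℕ) / m = (t : ℕ) →
          (t : ℕ) * m ≤ (j : ℕ) ∧ (j : ℕ) < (t : ℕ) * m + m :=
        fun j hj => (div_interval _ _ _ hm0).mp hj
      suffices hbij : ((Finset.univ : Finset (Fin k)).filter
          (fun j : Fin k => (j : ℕ) / m = (t : ℕ))).card
          = (Finset.univ : Finset (Fin m)).card by
        rw [hbij, Finset.card_univ, Fintype.card_fin]
      refine Finset.card_bij'
        (fun (j : Fin k) (hj : j ∈ (Finset.univ : Finset (Fin k)).filter
            (fun j : Fin k => (j : ℕ) / m = (t : ℕ))) =>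
          (⟨(j : ℕ) - (t : ℕ) * m, by
            have := hdig j (by simpa using hj); omega⟩ : Fin m))
        (fun (i : Fin m) (_ : i ∈ (Finset.univ : Finset (Fin m))) =>
          (⟨(t : ℕ) * m + (i : ℕ), by have := i.2; omega⟩ : Fin k)) ?_ ?_ ?_ ?_
      · intro j hj
        exact Finset.mem_univ _
      · intro i _
        simp only [Finset.mem_filter, Finset.mem_univ, true_and]
        rw [div_interval _ _ _ hm0]
        have := i.2
        omega
      · intro j hj
        simp only [Finset.mem_filter, Finset.mem_univ, true_and] at hj
        have := hdig j hj
        ext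
        simp
        omega
      · intro i _
        ext
        simp
    have hsum1 : ∀ t : Fin T,
        ∑ j : Fin k, (if (j : ℕ) / m = (t : ℕ) then (m : ℝ)⁻¹ else 0) = 1 := by
      intro t
      rw [sum_ite_card, hcount t, mul_inv_cancel₀ hm0']
    have hsumsq : ∀ t : Fin T,
        ∑ j : Fin k, (if (j : ℕ) / m = (t : ℕ) then (m : ℝ)⁻¹ else 0) *
          (if (j : ℕ) / m = (t : ℕ) then (m : ℝ)⁻¹ else 0) = (m : ℝ)⁻¹ := by
      intro t
      have he : ∀ j : Fin k, (if (j : ℕ) / m = (t : ℕ) then (m : ℝ)⁻¹ else 0) *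
          (if (j : ℕ) / m = (t : ℕ) then (m : ℝ)⁻¹ else 0)
          = (if (j : ℕ) / m = (t : ℕ) then (m : ℝ)⁻¹ * (m : ℝ)⁻¹ else 0) := by
        intro j; by_cases hj : (j : ℕ) / m = (t : ℕ) <;> simp [hj]
      calc ∑ j : Fin k, (if (j : ℕ) / m = (t : ℕ) then (m : ℝ)⁻¹ else 0) *
            (if (j : ℕ) / m = (t : ℕ) then (m : ℝ)⁻¹ else 0)
          = ∑ j : Fin k, (if (j : ℕ) / m = (t : ℕ) then (m : ℝ)⁻¹ * (m : ℝ)⁻¹ else 0) :=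
            Finset.sum_congr rfl fun j _ => he j
        _ = (m : ℝ)⁻¹ := by
            rw [sum_ite_card, hcount t]
            field_simp
    have hsumt : ∀ j : Fin k,
        ∑ t : Fin T, (if (j : ℕ) / m = (t : ℕ) then (m : ℝ)⁻¹ else 0) = (m : ℝ)⁻¹ := by
      intro j
      have hjT : (j : ℕ) / m < T := by
        rw [Nat.div_lt_iff_lt_mul hm0]
        have := j.2; omega
      have hiff : ∀ t : Fin T, ((j : ℕ) / m = (t : ℕ)) ↔ (t = ⟨(j : ℕ) / m, hjT⟩) := by
        intro t; rw [Fin.ext_iff]; simp [eq_comm]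
      calc ∑ t : Fin T, (if (j : ℕ) / m = (t : ℕ) then (m : ℝ)⁻¹ else 0)
          = ∑ t : Fin T, (if t = ⟨(j : ℕ) / m, hjT⟩ then (m : ℝ)⁻¹ else 0) :=
            Finset.sum_congr rfl fun t _ => by rw [if_congr (hiff t) rfl rfl]
        _ = (m : ℝ)⁻¹ := by simp
    -- distribution properties
    have hdist : ∀ t, IsDist (x t) := by
      intro t
      constructor
      · intro a
        apply Finset.sum_nonneg
        intro j _
        split
        · positivity
        · exact le_refl 0
      · have hg := h1 t (fun _ => 1)
        simp only [mul_one] at hg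
        rw [hg, hsum1 t]
    have hsupp : ∀ t a, (¬ ∃ i : Fin n, a = Sum.inl (Sum.inl i)) → x t a = 0 := by
      intro t a ha
      apply Finset.sum_eq_zero
      intro j _
      rw [if_neg]
      rintro ⟨-, rfl⟩
      exact ha ⟨f j, rfl⟩
    -- values of the matrices on the clique
    have hA : ∀ j j' : Fin k, adjMat n G (f j) (f j') = 1 := by
      intro j j'
      rcases eq_or_ne j j' with rfl | h
      · simp [adjMat]
      · simp [adjMat, hs.1 (hfmem j) (hfmem j') (hfinj.ne h)]
    have hRD : ∀ j j' : Fin k, Rmat2 n G k T γ ε (F j) (F j')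
        = 1 / 2 + (if j = j' then γ / 2 else 0) := by
      intro j j'
      show Rmat n G k γ (Sum.inl (f j)) (Sum.inl (f j')) = _
      simp only [Rmat, Matrix.smul_apply, Matrix.fromBlocks_apply₁₁, Matrix.add_apply,
        Matrix.smul_apply, Matrix.one_apply, hA j j', smul_eq_mul]
      rcases eq_or_ne j j' with rfl | h
      · simp; ring
      · simp [hfinj.ne h, h]
    have hCD : ∀ j j' : Fin k, Cmat2 n G k T γ ε (F j) (F j')
        = 1 / 2 + (if j = j' then γ / 2 else 0) := by
      intro j j'
      show Cmat n G k γ (Sum.inl (f j)) (Sum.inl (f j')) = _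
      simp only [Cmat, Matrix.smul_apply, Matrix.fromBlocks_apply₁₁, Matrix.add_apply,
        Matrix.smul_apply, Matrix.one_apply, hA j j', smul_eq_mul]
      rcases eq_or_ne j j' with rfl | h
      · simp; ring
      · simp [hfinj.ne h, h]
    -- master double-sum reduction
    have h4 : ∀ M : Matrix ((Fin n ⊕ Fin n) ⊕ Unit) ((Fin n ⊕ Fin n) ⊕ Unit) ℝ,
        ∑ a, ∑ b, ((1 / (T : ℝ)) * ∑ t : Fin T, x t a * x t b) * M a b
          = (1 / (T : ℝ)) * ∑ t : Fin T, ∑ j : Fin k,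
              (if (j : ℕ) / m = (t : ℕ) then (m : ℝ)⁻¹ else 0) *
              ∑ j' : Fin k, (if (j' : ℕ) / m = (t : ℕ) then (m : ℝ)⁻¹ else 0)
                * M (F j) (F j') := by
      intro M
      have e1 : ∀ t : Fin T, (∑ a, x t a * ∑ b, x t b * M a b)
          = ∑ j : Fin k, (if (j : ℕ) / m = (t : ℕ) then (m : ℝ)⁻¹ else 0) *
              ∑ j' : Fin k, (if (j' : ℕ) / m = (t : ℕ) then (m : ℝ)⁻¹ else 0)
                * M (F j) (F j') := by
        intro t
        rw [h1 t (fun a => ∑ b, x t b * M a b)]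
        exact Finset.sum_congr rfl fun j _ => by rw [h1 t (fun b => M (F j) b)]
      calc ∑ a, ∑ b, ((1 / (T : ℝ)) * ∑ t : Fin T, x t a * x t b) * M a b
          = ∑ a, ∑ b, ∑ t : Fin T, (1 / (T : ℝ)) * (x t a * (x t b * M a b)) := by
            refine Finset.sum_congr rfl fun a _ => Finset.sum_congr rfl fun b _ => ?_
            rw [Finset.mul_sum, Finset.sum_mul]
            exact Finset.sum_congr rfl fun t _ => by ring
        _ = ∑ a, ∑ t : Fin T, ∑ b, (1 / (T : ℝ)) * (x t a * (x t b * M a b)) :=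
            Finset.sum_congr rfl fun a _ => Finset.sum_comm
        _ = ∑ t : Fin T, ∑ a, ∑ b, (1 / (T : ℝ)) * (x t a * (x t b * M a b)) :=
            Finset.sum_comm
        _ = (1 / (T : ℝ)) * ∑ t : Fin T, ∑ a, x t a * ∑ b, x t b * M a b := by
            rw [Finset.mul_sum]
            refine Finset.sum_congr rfl fun t _ => ?_
            rw [Finset.mul_sum]
            refine Finset.sum_congr rfl fun a _ => ?_
            rw [Finset.mul_sum, Finset.mul_sum]
        _ = _ := by
            congr 1
            exact Finset.sum_congr rfl fun t _ => e1 t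
    -- value of the diagonal-block games
    have hval : ∀ M : Matrix ((Fin n ⊕ Fin n) ⊕ Unit) ((Fin n ⊕ Fin n) ⊕ Unit) ℝ,
        (∀ j j' : Fin k, M (F j) (F j') = 1 / 2 + (if j = j' then γ / 2 else 0)) →
        ∑ a, ∑ b, ((1 / (T : ℝ)) * ∑ t : Fin T, x t a * x t b) * M a b
          = (1 + γ * (T : ℝ) / (k : ℝ)) / 2 := by
      intro M hM
      rw [h4 M]
      have inner : ∀ (t : Fin T) (j : Fin k),
          (∑ j' : Fin k, (if (j' : ℕ) / m = (t : ℕ) then (m : ℝ)⁻¹ else 0) * M (F j) (F j'))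
            = 1 / 2 + (if (j : ℕ) / m = (t : ℕ) then (m : ℝ)⁻¹ else 0) * (γ / 2) := by
        intro t j
        have he : ∀ j' : Fin k,
            (if (j' : ℕ) / m = (t : ℕ) then (m : ℝ)⁻¹ else 0) * M (F j) (F j')
            = (if (j' : ℕ) / m = (t : ℕ) then (m : ℝ)⁻¹ else 0) * (1 / 2)
              + (if j' = j then (if (j : ℕ) / m = (t : ℕ) then (m : ℝ)⁻¹ else 0) * (γ / 2)
                 else 0) := by
          intro j'
          rw [hM j j']
          rcases eq_or_ne j' j with rfl | h
          · by_cases hc : (j' : ℕ) / m = (t : ℕ) <;> simp [hc] <;> ring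
          · simp [h, Ne.symm h]
        calc (∑ j' : Fin k,
              (if (j' : ℕ) / m = (t : ℕ) then (m : ℝ)⁻¹ else 0) * M (F j) (F j'))
            = ∑ j' : Fin k,
              ((if (j' : ℕ) / m = (t : ℕ) then (m : ℝ)⁻¹ else 0) * (1 / 2)
              + (if j' = j then (if (j : ℕ) / m = (t : ℕ) then (m : ℝ)⁻¹ else 0) * (γ / 2)
                 else 0)) := Finset.sum_congr rfl fun j' _ => he j'
          _ = 1 / 2 + (if (j : ℕ) / m = (t : ℕ) then (m : ℝ)⁻¹ else 0) * (γ / 2) := by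
              rw [Finset.sum_add_distrib, ← Finset.sum_mul, hsum1 t, one_mul]
              congr 1
              simp
      have middle : ∀ t : Fin T,
          (∑ j : Fin k, (if (j : ℕ) / m = (t : ℕ) then (m : ℝ)⁻¹ else 0) *
            ∑ j' : Fin k, (if (j' : ℕ) / m = (t : ℕ) then (m : ℝ)⁻¹ else 0) * M (F j) (F j'))
            = 1 / 2 + (m : ℝ)⁻¹ * (γ / 2) := by
        intro t
        have he : ∀ j : Fin k,
            (if (j : ℕ) / m = (t : ℕ) then (m : ℝ)⁻¹ else 0) *
              (∑ j' : Fin k, (if (j' : ℕ) / m = (t : ℕ) then (m : ℝ)⁻¹ else 0) * M (F j) (F j'))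
            = (if (j : ℕ) / m = (t : ℕ) then (m : ℝ)⁻¹ else 0) * (1 / 2)
              + ((if (j : ℕ) / m = (t : ℕ) then (m : ℝ)⁻¹ else 0) *
                 (if (j : ℕ) / m = (t : ℕ) then (m : ℝ)⁻¹ else 0)) * (γ / 2) := by
          intro j
          rw [inner t j]
          ring
        calc (∑ j : Fin k, (if (j : ℕ) / m = (t : ℕ) then (m : ℝ)⁻¹ else 0) *
            ∑ j' : Fin k, (if (j' : ℕ) / m = (t : ℕ) then (m : ℝ)⁻¹ else 0) * M (F j) (F j'))
            = ∑ j : Fin k,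
              ((if (j : ℕ) / m = (t : ℕ) then (m : ℝ)⁻¹ else 0) * (1 / 2)
              + ((if (j : ℕ) / m = (t : ℕ) then (m : ℝ)⁻¹ else 0) *
                 (if (j : ℕ) / m = (t : ℕ) then (m : ℝ)⁻¹ else 0)) * (γ / 2)) :=
              Finset.sum_congr rfl fun j _ => he j
          _ = 1 / 2 + (m : ℝ)⁻¹ * (γ / 2) := by
              rw [Finset.sum_add_distrib, ← Finset.sum_mul, ← Finset.sum_mul, hsum1 t,
                hsumsq t, one_mul]
      calc (1 / (T : ℝ)) * ∑ t : Fin T, ∑ j : Fin k,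
              (if (j : ℕ) / m = (t : ℕ) then (m : ℝ)⁻¹ else 0) *
              ∑ j' : Fin k, (if (j' : ℕ) / m = (t : ℕ) then (m : ℝ)⁻¹ else 0) * M (F j) (F j')
          = (1 / (T : ℝ)) * ∑ t : Fin T, (1 / 2 + (m : ℝ)⁻¹ * (γ / 2)) := by
            congr 1
            exact Finset.sum_congr rfl fun t _ => middle t
        _ = (1 + γ * (T : ℝ) / (k : ℝ)) / 2 := by
            rw [Finset.sum_const, Finset.card_univ, Fintype.card_fin, nsmul_eq_mul, hkm]
            field_simp
    -- marginal / deviation reductions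
    have hdevR : ∀ g : ((Fin n ⊕ Fin n) ⊕ Unit) → ℝ,
        ∑ a, ∑ b, ((1 / (T : ℝ)) * ∑ t : Fin T, x t a * x t b) * g b
          = (k : ℝ)⁻¹ * ∑ j : Fin k, g (F j) := by
      intro g
      rw [h4 (fun _ b => g b)]
      calc (1 / (T : ℝ)) * ∑ t : Fin T, ∑ j : Fin k,
              (if (j : ℕ) / m = (t : ℕ) then (m : ℝ)⁻¹ else 0) *
              ∑ j' : Fin k, (if (j' : ℕ) / m = (t : ℕ) then (m : ℝ)⁻¹ else 0) * g (F j')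
          = (1 / (T : ℝ)) * ∑ t : Fin T, ∑ j' : Fin k,
              (if (j' : ℕ) / m = (t : ℕ) then (m : ℝ)⁻¹ else 0) * g (F j') := by
            congr 1
            refine Finset.sum_congr rfl fun t _ => ?_
            rw [← Finset.sum_mul, hsum1 t, one_mul]
        _ = (1 / (T : ℝ)) * ∑ j' : Fin k,
              (∑ t : Fin T, (if (j' : ℕ) / m = (t : ℕ) then (m : ℝ)⁻¹ else 0)) * g (F j') := by
            rw [Finset.sum_comm]
            congr 1
            exact Finset.sum_congr rfl fun j' _ => (Finset.sum_mul _ _ _).symm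
        _ = (1 / (T : ℝ)) * ∑ j' : Fin k, (m : ℝ)⁻¹ * g (F j') := by
            congr 1
            exact Finset.sum_congr rfl fun j' _ => by rw [hsumt j']
        _ = (k : ℝ)⁻¹ * ∑ j : Fin k, g (F j) := by
            rw [← Finset.mul_sum, ← mul_assoc, hkm, mul_inv]
            congr 1
            field_simp
    have hdevC : ∀ g : ((Fin n ⊕ Fin n) ⊕ Unit) → ℝ,
        ∑ a, ∑ b, ((1 / (T : ℝ)) * ∑ t : Fin T, x t a * x t b) * g a
          = (k : ℝ)⁻¹ * ∑ j : Fin k, g (F j) := by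
      intro g
      rw [h4 (fun a _ => g a)]
      calc (1 / (T : ℝ)) * ∑ t : Fin T, ∑ j : Fin k,
              (if (j : ℕ) / m = (t : ℕ) then (m : ℝ)⁻¹ else 0) *
              ∑ j' : Fin k, (if (j' : ℕ) / m = (t : ℕ) then (m : ℝ)⁻¹ else 0) * g (F j)
          = (1 / (T : ℝ)) * ∑ t : Fin T, ∑ j : Fin k,
              (if (j : ℕ) / m = (t : ℕ) then (m : ℝ)⁻¹ else 0) * g (F j) := by
            congr 1
            refine Finset.sum_congr rfl fun t _ => Finset.sum_congr rfl fun j _ => ?_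
            rw [← Finset.sum_mul, hsum1 t, one_mul]
        _ = (1 / (T : ℝ)) * ∑ j : Fin k,
              (∑ t : Fin T, (if (j : ℕ) / m = (t : ℕ) then (m : ℝ)⁻¹ else 0)) * g (F j) := by
            rw [Finset.sum_comm]
            congr 1
            exact Finset.sum_congr rfl fun j _ => (Finset.sum_mul _ _ _).symm
        _ = (1 / (T : ℝ)) * ∑ j : Fin k, (m : ℝ)⁻¹ * g (F j) := by
            congr 1
            exact Finset.sum_congr rfl fun j _ => by rw [hsumt j]
        _ = (k : ℝ)⁻¹ * ∑ j : Fin k, g (F j) := by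
            rw [← Finset.mul_sum, ← mul_assoc, hkm, mul_inv]
            congr 1
            field_simp
    -- injectivity indicator bound
    have hone : ∀ i : Fin n, ∑ j : Fin k, (if f j = i then (1 : ℝ) else 0) ≤ 1 := by
      intro i
      by_cases hex : ∃ j, f j = i
      · obtain ⟨j0, hj0⟩ := hex
        have hiff : ∀ j : Fin k, (f j = i) ↔ (j = j0) :=
          fun j => ⟨fun h => hfinj (h.trans hj0.symm), fun h => h ▸ hj0⟩
        calc ∑ j : Fin k, (if f j = i then (1 : ℝ) else 0)
            = ∑ j : Fin k, (if j = j0 then (1 : ℝ) else 0) :=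
              Finset.sum_congr rfl fun j _ => if_congr (hiff j) rfl rfl
          _ ≤ 1 := by simp
      · push_neg at hex
        calc ∑ j : Fin k, (if f j = i then (1 : ℝ) else 0)
            = ∑ j : Fin k, (0 : ℝ) := Finset.sum_congr rfl fun j _ => if_neg (hex j)
          _ ≤ 1 := by simp
    have hT1 : (1 : ℝ) ≤ (T : ℝ) := by exact_mod_cast hT
    have hk1 : (0 : ℝ) < (k : ℝ) := by exact_mod_cast hk
    have hhalf : (1 : ℝ) / 2 ≤ (1 + γ * (T : ℝ) / (k : ℝ)) / 2 := by
      have : 0 ≤ γ * (T : ℝ) / (k : ℝ) := by positivity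
      linarith
    -- the witness distributions
    refine ⟨x, x, hdist, hdist, hsupp, hsupp, ⟨?_, ?_⟩, hval _ hRD, hval _ hCD, hhalf⟩
    · -- row CCE condition
      intro a'
      rw [hval _ hRD, hdevR (fun b => Rmat2 n G k T γ ε a' b), sub_zero]
      rcases a' with (i | i) | u
      · have hb : ∀ j : Fin k, Rmat2 n G k T γ ε (Sum.inl (Sum.inl i)) (F j)
            ≤ 1 / 2 + (γ / 2) * (if f j = i then (1 : ℝ) else 0) := by
          intro j
          show Rmat n G k γ (Sum.inl i) (Sum.inl (f j)) ≤ _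
          simp only [Rmat, Matrix.smul_apply, Matrix.fromBlocks_apply₁₁, Matrix.add_apply,
            Matrix.smul_apply, Matrix.one_apply, smul_eq_mul, adjMat]
          rcases eq_or_ne i (f j) with h | h
          · simp [h, eq_comm]
            linarith
          · simp [h, Ne.symm h]
            split <;> nlinarith
        calc (k : ℝ)⁻¹ * ∑ j : Fin k, Rmat2 n G k T γ ε (Sum.inl (Sum.inl i)) (F j)
            ≤ (k : ℝ)⁻¹ * ∑ j : Fin k,
                (1 / 2 + (γ / 2) * (if f j = i then (1 : ℝ) else 0)) := by
              apply mul_le_mul_of_nonneg_left _ (by positivity)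
              exact Finset.sum_le_sum fun j _ => hb j
          _ = (k : ℝ)⁻¹ * ((k : ℝ) * (1 / 2)
                + (γ / 2) * ∑ j : Fin k, (if f j = i then (1 : ℝ) else 0)) := by
              rw [Finset.sum_add_distrib, ← Finset.mul_sum, Finset.sum_const, Finset.card_univ,
                Fintype.card_fin, nsmul_eq_mul]
          _ ≤ (k : ℝ)⁻¹ * ((k : ℝ) * (1 / 2) + (γ / 2) * 1) := by
              apply mul_le_mul_of_nonneg_left _ (by positivity)
              have := hone i
              nlinarith
          _ ≤ (1 + γ * (T : ℝ) / (k : ℝ)) / 2 := by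
              have hkey : (k : ℝ) * (1 / 2) + γ / 2 * 1
                  ≤ (k : ℝ) * ((1 + γ * (T : ℝ) / (k : ℝ)) / 2) := by
                have he2 : (k : ℝ) * ((1 + γ * (T : ℝ) / (k : ℝ)) / 2)
                    = (k : ℝ) * (1 / 2) + γ * (T : ℝ) / 2 := by
                  field_simp
                rw [he2]
                nlinarith
              calc (k : ℝ)⁻¹ * ((k : ℝ) * (1 / 2) + γ / 2 * 1)
                  ≤ (k : ℝ)⁻¹ * ((k : ℝ) * ((1 + γ * (T : ℝ) / (k : ℝ)) / 2)) :=
                    mul_le_mul_of_nonneg_left hkey (by positivity)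
                _ = (1 + γ * (T : ℝ) / (k : ℝ)) / 2 := by rw [inv_mul_cancel_left₀ hk0]
      · have hb : ∀ j : Fin k, Rmat2 n G k T γ ε (Sum.inl (Sum.inr i)) (F j)
            = ((k : ℝ) / 2) * (if f j = i then (1 : ℝ) else 0) := by
          intro j
          show Rmat n G k γ (Sum.inr i) (Sum.inl (f j)) = _
          simp only [Rmat, Matrix.smul_apply, Matrix.fromBlocks_apply₂₁, Matrix.smul_apply,
            Matrix.one_apply, smul_eq_mul]
          rcases eq_or_ne i (f j) with h | h
          · simp [h, eq_comm]; ring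
          · simp [h, Ne.symm h]
        have h5 := hone i
        calc (k : ℝ)⁻¹ * ∑ j : Fin k, Rmat2 n G k T γ ε (Sum.inl (Sum.inr i)) (F j)
            = (k : ℝ)⁻¹ * ((k : ℝ) / 2 * ∑ j : Fin k, (if f j = i then (1 : ℝ) else 0)) := by
              congr 1
              rw [Finset.mul_sum]
              exact Finset.sum_congr rfl fun j _ => hb j
          _ ≤ (k : ℝ)⁻¹ * ((k : ℝ) / 2 * 1) := by
              apply mul_le_mul_of_nonneg_left _ (by positivity)
              apply mul_le_mul_of_nonneg_left h5 (by positivity)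
          _ = 1 / 2 := by field_simp
          _ ≤ (1 + γ * (T : ℝ) / (k : ℝ)) / 2 := hhalf
      · have hb : ∀ j : Fin k, Rmat2 n G k T γ ε (Sum.inr u) (F j)
            = (1 + γ * (T : ℝ) / (k : ℝ)) / 2 := fun j => rfl
        calc (k : ℝ)⁻¹ * ∑ j : Fin k, Rmat2 n G k T γ ε (Sum.inr u) (F j)
            = (k : ℝ)⁻¹ * ∑ j : Fin k, (1 + γ * (T : ℝ) / (k : ℝ)) / 2 := by
              simp only [hb]
          _ = (1 + γ * (T : ℝ) / (k : ℝ)) / 2 := by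
              rw [Finset.sum_const, Finset.card_univ, Fintype.card_fin, nsmul_eq_mul,
                ← mul_assoc, inv_mul_cancel₀ hk0, one_mul]
          _ ≤ (1 + γ * (T : ℝ) / (k : ℝ)) / 2 := le_refl _
    · -- column CCE condition
      intro b'
      rw [hval _ hCD, hdevC (fun a => Cmat2 n G k T γ ε a b'), sub_zero]
      rcases b' with (p | p) | u
      · have hb : ∀ j : Fin k, Cmat2 n G k T γ ε (F j) (Sum.inl (Sum.inl p))
            ≤ 1 / 2 + (γ / 2) * (if f j = p then (1 : ℝ) else 0) := by
          intro j
          show Cmat n G k γ (Sum.inl (f j)) (Sum.inl p) ≤ _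
          simp only [Cmat, Matrix.smul_apply, Matrix.fromBlocks_apply₁₁, Matrix.add_apply,
            Matrix.smul_apply, Matrix.one_apply, smul_eq_mul, adjMat]
          rcases eq_or_ne (f j) p with h | h
          · simp [h]
            linarith
          · simp [h]
            split <;> nlinarith
        calc (k : ℝ)⁻¹ * ∑ j : Fin k, Cmat2 n G k T γ ε (F j) (Sum.inl (Sum.inl p))
            ≤ (k : ℝ)⁻¹ * ∑ j : Fin k,
                (1 / 2 + (γ / 2) * (if f j = p then (1 : ℝ) else 0)) := by
              apply mul_le_mul_of_nonneg_left _ (by positivity)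
              exact Finset.sum_le_sum fun j _ => hb j
          _ = (k : ℝ)⁻¹ * ((k : ℝ) * (1 / 2)
                + (γ / 2) * ∑ j : Fin k, (if f j = p then (1 : ℝ) else 0)) := by
              rw [Finset.sum_add_distrib, ← Finset.mul_sum, Finset.sum_const, Finset.card_univ,
                Fintype.card_fin, nsmul_eq_mul]
          _ ≤ (k : ℝ)⁻¹ * ((k : ℝ) * (1 / 2) + (γ / 2) * 1) := by
              apply mul_le_mul_of_nonneg_left _ (by positivity)
              have := hone p
              nlinarith
          _ ≤ (1 + γ * (T : ℝ) / (k : ℝ)) / 2 := by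
              have hkey : (k : ℝ) * (1 / 2) + γ / 2 * 1
                  ≤ (k : ℝ) * ((1 + γ * (T : ℝ) / (k : ℝ)) / 2) := by
                have he2 : (k : ℝ) * ((1 + γ * (T : ℝ) / (k : ℝ)) / 2)
                    = (k : ℝ) * (1 / 2) + γ * (T : ℝ) / 2 := by
                  field_simp
                rw [he2]
                nlinarith
              calc (k : ℝ)⁻¹ * ((k : ℝ) * (1 / 2) + γ / 2 * 1)
                  ≤ (k : ℝ)⁻¹ * ((k : ℝ) * ((1 + γ * (T : ℝ) / (k : ℝ)) / 2)) :=
                    mul_le_mul_of_nonneg_left hkey (by positivity)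
                _ = (1 + γ * (T : ℝ) / (k : ℝ)) / 2 := by rw [inv_mul_cancel_left₀ hk0]
      · have hb : ∀ j : Fin k, Cmat2 n G k T γ ε (F j) (Sum.inl (Sum.inr p))
            = ((k : ℝ) / 2) * (if f j = p then (1 : ℝ) else 0) := by
          intro j
          show Cmat n G k γ (Sum.inl (f j)) (Sum.inr p) = _
          simp only [Cmat, Matrix.smul_apply, Matrix.fromBlocks_apply₁₂, Matrix.smul_apply,
            Matrix.one_apply, smul_eq_mul]
          rcases eq_or_ne (f j) p with h | h
          · simp [h]; ring
          · simp [h]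
        have h5 := hone p
        calc (k : ℝ)⁻¹ * ∑ j : Fin k, Cmat2 n G k T γ ε (F j) (Sum.inl (Sum.inr p))
            = (k : ℝ)⁻¹ * ((k : ℝ) / 2 * ∑ j : Fin k, (if f j = p then (1 : ℝ) else 0)) := by
              congr 1
              rw [Finset.mul_sum]
              exact Finset.sum_congr rfl fun j _ => hb j
          _ ≤ (k : ℝ)⁻¹ * ((k : ℝ) / 2 * 1) := by
              apply mul_le_mul_of_nonneg_left _ (by positivity)
              apply mul_le_mul_of_nonneg_left h5 (by positivity)
          _ = 1 / 2 := by field_simp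
          _ ≤ (1 + γ * (T : ℝ) / (k : ℝ)) / 2 := hhalf
      · have hb : ∀ j : Fin k, Cmat2 n G k T γ ε (F j) (Sum.inr u)
            = (1 + γ * (T : ℝ) / (k : ℝ)) / 2 := fun j => rfl
        calc (k : ℝ)⁻¹ * ∑ j : Fin k, Cmat2 n G k T γ ε (F j) (Sum.inr u)
            = (k : ℝ)⁻¹ * ∑ j : Fin k, (1 + γ * (T : ℝ) / (k : ℝ)) / 2 := by
              simp only [hb]
          _ = (1 + γ * (T : ℝ) / (k : ℝ)) / 2 := by
              rw [Finset.sum_const, Finset.card_univ, Fintype.card_fin, nsmul_eq_mul,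
                ← mul_assoc, inv_mul_cancel₀ hk0, one_mul]
          _ ≤ (1 + γ * (T : ℝ) / (k : ℝ)) / 2 := le_refl _
end
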